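/- Let λ be a linear functional on Π(ℝ^d) vanishing on all polynomials of degree < k. Then (λ⊗λ)(‖x−y‖^(2k)) = 0 if and only if λ vanishes on all polynomials of degree ≤ k. -/

import Mathlib

open MvPolynomial Finset

noncomputable section

/-- The multi-index on the first (`x`) block of variables of a monomial in `Fin d ⊕ Fin d`. -/
def xpart {d : ℕ} (m : (Fin d ⊕ Fin d) →₀ ℕ) : Fin d →₀ ℕ :=
  Finsupp.equivFunOnFinite.symm fun i => m (Sum.inl i)

/-- The multi-index on the second (`y`) block of variables. -/
def ypart {d : ℕ} (m : (Fin d ⊕ Fin d) →₀ ℕ) : Fin d →₀ ℕ :=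
  Finsupp.equivFunOnFinite.symm fun i => m (Sum.inr i)

/-- `(l ⊗ m) f`: apply `l` in the `x`-variables and `m` in the `y`-variables of a
two-block polynomial `f`, via its canonical representation as a sum of products
of monomials in `x` and monomials in `y`. -/
def tensorApply {d : ℕ} (l m : Module.Dual ℝ (MvPolynomial (Fin d) ℝ))
    (f : MvPolynomial (Fin d ⊕ Fin d) ℝ) : ℝ :=
  ∑ mo ∈ f.support, f.coeff mo * l (monomial (xpart mo) 1) * m (monomial (ypart mo) 1)

/-- Apply the linear functional `l` in the second (`y`) block of variables,
yielding a polynomial in the first (`x`) block of variables. -/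
def applySecond {d : ℕ} (l : Module.Dual ℝ (MvPolynomial (Fin d) ℝ))
    (f : MvPolynomial (Fin d ⊕ Fin d) ℝ) : MvPolynomial (Fin d) ℝ :=
  ∑ mo ∈ f.support, monomial (xpart mo) (f.coeff mo * l (monomial (ypart mo) 1))

/-- The polynomial `(x,y) ↦ ‖x-y‖^(2k)` in the `2d` variables `x(1),…,x(d),y(1),…,y(d)`. -/
def distPoly (d k : ℕ) : MvPolynomial (Fin d ⊕ Fin d) ℝ :=
  (∑ i : Fin d, (X (Sum.inl i) - X (Sum.inr i)) ^ 2) ^ k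

/-- `l` vanishes on all polynomials of total degree `< k` (i.e. `l ⊥ Π_{<k}`). -/
def VanishesLT {d : ℕ} (l : Module.Dual ℝ (MvPolynomial (Fin d) ℝ)) (k : ℕ) : Prop :=
  ∀ p : MvPolynomial (Fin d) ℝ, p.totalDegree < k → l p = 0

/-- `l` vanishes on all polynomials of total degree `≤ k` (i.e. `l ⊥ Π_{≤k}`). -/
def VanishesLE {d : ℕ} (l : Module.Dual ℝ (MvPolynomial (Fin d) ℝ)) (k : ℕ) : Prop :=
  ∀ p : MvPolynomial (Fin d) ℝ, p.totalDegree ≤ k → l p = 0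

/-- `p_{a,β} : x ↦ ‖x‖^(2a) x^β` as a polynomial. -/
def pPoly (d : ℕ) (a : ℕ) (β : Fin d →₀ ℕ) : MvPolynomial (Fin d) ℝ :=
  (∑ i : Fin d, X i ^ 2) ^ a * monomial β 1

/-! Write `p_{a,β} = ‖x‖^(2a) x^β`, of degree `2a + |β|`. Expanding
`‖x-y‖² = -2⟨x,y⟩ + ‖x‖² + ‖y‖²` and `⟨x,y⟩^b` by the multinomial theorem turns
`(λ⊗λ)‖x-y‖^(2k)` into a combination of products `λ(p_{a,β}) λ(p_{c,β})` with `a + |β| + c = k`.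
As `λ ⊥ Π_{<k}`, such a product vanishes unless both degrees equal `k`, i.e. `c = a` and
`2a + |β| = k`; it is then a square, and its coefficient `(-2)^|β| · (positive)` has sign `(-1)^k`.
So `(-1)^k (λ⊗λ)‖x-y‖^(2k)` is a sum of nonnegative terms, and it vanishes iff `λ(p_{a,β}) = 0`
whenever `2a + |β| = k`. These `p_{a,β}` have degree `k` and include every monomial of degree `k`,
so this condition is equivalent to `λ ⊥ Π_{≤k}`. -/

def tensorApplyₗ {d : ℕ} (l m : Module.Dual ℝ (MvPolynomial (Fin d) ℝ)) :
    MvPolynomial (Fin d ⊕ Fin d) ℝ →ₗ[ℝ] ℝ :=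
  Finsupp.linearCombination ℝ (fun mo => l (monomial (xpart mo) 1) * m (monomial (ypart mo) 1))
    ∘ₗ (AddMonoidAlgebra.coeffLinearEquiv ℝ).toLinearMap

theorem tensorApplyₗ_apply {d : ℕ} (l m : Module.Dual ℝ (MvPolynomial (Fin d) ℝ))
    (f : MvPolynomial (Fin d ⊕ Fin d) ℝ) : tensorApplyₗ l m f = tensorApply l m f := by
  simp only [tensorApplyₗ, tensorApply, LinearMap.comp_apply, Finsupp.linearCombination_apply,
    Finsupp.sum, smul_eq_mul, mul_assoc]
  rfl

theorem tensorApplyₗ_monomial {d : ℕ} (l m : Module.Dual ℝ (MvPolynomial (Fin d) ℝ))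
    (n : Fin d ⊕ Fin d →₀ ℕ) (c : ℝ) :
    tensorApplyₗ l m (monomial n c) = c * (l (monomial (xpart n) 1) * m (monomial (ypart n) 1)) :=
  Finsupp.linearCombination_single ℝ c n

theorem xpart_mapDomain_add {d : ℕ} (α β : Fin d →₀ ℕ) :
    xpart (α.mapDomain Sum.inl + β.mapDomain Sum.inr) = α := by
  ext i
  simp [xpart, Finsupp.mapDomain_apply Sum.inl_injective,
    Finsupp.mapDomain_of_notMem_range (f := Sum.inr) β (Sum.inl i) (by simp)]

theorem ypart_mapDomain_add {d : ℕ} (α β : Fin d →₀ ℕ) :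
    ypart (α.mapDomain Sum.inl + β.mapDomain Sum.inr) = β := by
  ext i
  simp [ypart, Finsupp.mapDomain_apply Sum.inr_injective,
    Finsupp.mapDomain_of_notMem_range (f := Sum.inl) α (Sum.inr i) (by simp)]

theorem tensorApply_rename_mul_rename {d : ℕ} (l m : Module.Dual ℝ (MvPolynomial (Fin d) ℝ))
    (p q : MvPolynomial (Fin d) ℝ) :
    tensorApply l m (rename Sum.inl p * rename Sum.inr q) = l p * m q := by
  rw [← tensorApplyₗ_apply]
  induction p using MvPolynomial.induction_on' with
  | add p₁ p₂ h₁ h₂ => simp only [map_add, add_mul, h₁, h₂]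
  | monomial α a =>
    induction q using MvPolynomial.induction_on' with
    | add q₁ q₂ h₁ h₂ => simp only [map_add, mul_add, h₁, h₂]
    | monomial β b =>
      have hscale (f : Module.Dual ℝ (MvPolynomial (Fin d) ℝ)) (γ : Fin d →₀ ℕ) (c : ℝ) :
          f (monomial γ c) = c * f (monomial γ 1) := by
        rw [← smul_eq_mul, ← map_smul, smul_monomial, smul_eq_mul, mul_one]
      rw [rename_monomial, rename_monomial, monomial_mul, tensorApplyₗ_monomial,
        xpart_mapDomain_add, ypart_mapDomain_add, hscale l α a, hscale m β b]
      ring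

def sqNormPoly (d : ℕ) : MvPolynomial (Fin d) ℝ := ∑ i : Fin d, X i ^ 2

def innerPoly (d : ℕ) : MvPolynomial (Fin d ⊕ Fin d) ℝ := ∑ i : Fin d, X (Sum.inl i) * X (Sum.inr i)

theorem distPoly_eq (d k : ℕ) :
    distPoly d k =
      (-2 * innerPoly d + (rename Sum.inl (sqNormPoly d) + rename Sum.inr (sqNormPoly d))) ^ k := by
  simp only [distPoly, innerPoly, sqNormPoly, map_sum, map_pow, rename_X, mul_sum,
    ← sum_add_distrib]
  congr 1
  exact sum_congr rfl fun i _ => by ring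

theorem innerPoly_pow (d b : ℕ) :
    innerPoly d ^ b = ∑ β ∈ piAntidiag univ b, Nat.multinomial univ β •
      (rename Sum.inl (monomial (Finsupp.equivFunOnFinite.symm β) 1) *
        rename Sum.inr (monomial (Finsupp.equivFunOnFinite.symm β) 1)) := by
  rw [innerPoly, sum_pow_eq_sum_piAntidiag]
  refine sum_congr rfl fun β _ => ?_
  simp only [nsmul_eq_mul, monomial_eq, C_1, one_mul, Finsupp.prod_pow, map_prod, map_pow,
    rename_X, Finsupp.coe_equivFunOnFinite_symm, ← prod_mul_distrib, mul_pow]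

theorem tensorApply_sqNormPoly_pow_mul_innerPoly_pow {d : ℕ}
    (l m : Module.Dual ℝ (MvPolynomial (Fin d) ℝ)) (a b c : ℕ) :
    tensorApply l m (rename Sum.inl (sqNormPoly d ^ a) * rename Sum.inr (sqNormPoly d ^ c) *
      innerPoly d ^ b) =
      ∑ β ∈ piAntidiag univ b, Nat.multinomial univ β *
        (l (pPoly d a (Finsupp.equivFunOnFinite.symm β)) *
          m (pPoly d c (Finsupp.equivFunOnFinite.symm β))) := by
  rw [← tensorApplyₗ_apply, innerPoly_pow, mul_sum, map_sum]
  refine sum_congr rfl fun β _ => ?_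
  rw [mul_smul_comm, map_nsmul, nsmul_eq_mul, tensorApplyₗ_apply, ← tensorApply_rename_mul_rename]
  congr 2
  simp only [pPoly, sqNormPoly, map_mul]
  ring

theorem tensorApply_distPoly {d : ℕ} (l m : Module.Dual ℝ (MvPolynomial (Fin d) ℝ)) (k : ℕ) :
    tensorApply l m (distPoly d k) =
      ∑ b ∈ range (k + 1), ∑ a ∈ range (k - b + 1), ∑ β ∈ piAntidiag univ b,
        (-2) ^ b * k.choose b * (k - b).choose a * Nat.multinomial univ β *
          (l (pPoly d a (Finsupp.equivFunOnFinite.symm β)) *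
            m (pPoly d (k - b - a) (Finsupp.equivFunOnFinite.symm β))) := by
  rw [← tensorApplyₗ_apply, distPoly_eq, add_pow, map_sum]
  refine sum_congr rfl fun b _ => ?_
  rw [add_pow, mul_sum, sum_mul, map_sum]
  refine sum_congr rfl fun a _ => ?_
  have hterm : ((-2 * innerPoly d) ^ b *
      (rename Sum.inl (sqNormPoly d) ^ a * rename Sum.inr (sqNormPoly d) ^ (k - b - a) *
        ((k - b).choose a : MvPolynomial (Fin d ⊕ Fin d) ℝ)) * (k.choose b : MvPolynomial _ ℝ)) =
      ((-2) ^ b * k.choose b * (k - b).choose a : ℝ) •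
        (rename Sum.inl (sqNormPoly d ^ a) * rename Sum.inr (sqNormPoly d ^ (k - b - a)) *
          innerPoly d ^ b) := by
    rw [smul_eq_C_mul]
    simp only [map_pow, map_mul, map_neg, map_natCast, map_ofNat]
    ring
  rw [hterm, map_smul, tensorApplyₗ_apply, tensorApply_sqNormPoly_pow_mul_innerPoly_pow,
    smul_eq_mul, mul_sum]
  refine sum_congr rfl fun β _ => ?_
  ring

theorem MvPolynomial.linearMap_eq_zero_of_totalDegree_le {σ R M : Type*} [CommSemiring R]
    [AddCommMonoid M] [Module R M] (f : MvPolynomial σ R →ₗ[R] M) {k : ℕ}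
    (hf : ∀ s : σ →₀ ℕ, (s.sum fun _ e => e) ≤ k → f (monomial s 1) = 0)
    {p : MvPolynomial σ R} (hp : p.totalDegree ≤ k) : f p = 0 := by
  rw [p.as_sum, map_sum]
  refine sum_eq_zero fun s hs => ?_
  rw [← mul_one (coeff s p), ← smul_eq_mul, ← smul_monomial, map_smul,
    hf s ((le_totalDegree hs).trans hp), smul_zero]

theorem totalDegree_pPoly_le (d a : ℕ) (β : Fin d → ℕ) :
    (pPoly d a (Finsupp.equivFunOnFinite.symm β)).totalDegree ≤ 2 * a + ∑ i, β i := by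
  have hsq : (∑ i : Fin d, (X i : MvPolynomial (Fin d) ℝ) ^ 2).totalDegree ≤ 2 :=
    (totalDegree_finsetSum _ _).trans (Finset.sup_le fun i _ => (totalDegree_X_pow i 2).le)
  refine (totalDegree_mul _ _).trans (add_le_add ?_ ((totalDegree_monomial_le _ _).trans_eq ?_))
  · exact (totalDegree_pow _ _).trans (by rw [mul_comm]; gcongr)
  · exact Finsupp.sum_fintype _ _ fun _ => rfl

section VanishesLT

variable {d k : ℕ} {l : Module.Dual ℝ (MvPolynomial (Fin d) ℝ)}

theorem VanishesLT.apply_pPoly_eq_zero (h : VanishesLT l k) {a : ℕ} {β : Fin d → ℕ}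
    (hlt : 2 * a + ∑ i, β i < k) : l (pPoly d a (Finsupp.equivFunOnFinite.symm β)) = 0 :=
  h _ ((totalDegree_pPoly_le d a β).trans_lt hlt)

theorem VanishesLT.apply_pPoly_mul_apply_pPoly (h : VanishesLT l k) {a c : ℕ} {β : Fin d → ℕ}
    (habc : a + ∑ i, β i + c = k) :
    l (pPoly d a (Finsupp.equivFunOnFinite.symm β)) *
        l (pPoly d c (Finsupp.equivFunOnFinite.symm β)) =
      if 2 * a + ∑ i, β i = k then l (pPoly d a (Finsupp.equivFunOnFinite.symm β)) ^ 2 else 0 := by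
  rcases lt_trichotomy (2 * a + ∑ i, β i) k with hlt | heq | hgt
  · rw [h.apply_pPoly_eq_zero hlt, zero_mul, if_neg hlt.ne]
  · obtain rfl : c = a := by omega
    rw [if_pos heq, sq]
  · rw [h.apply_pPoly_eq_zero (by omega : 2 * c + ∑ i, β i < k), mul_zero, if_neg hgt.ne']

theorem VanishesLT.vanishesLE_iff (h : VanishesLT l k) :
    VanishesLE l k ↔ ∀ a (β : Fin d → ℕ), 2 * a + ∑ i, β i = k →
      l (pPoly d a (Finsupp.equivFunOnFinite.symm β)) = 0 := by
  refine ⟨fun hle a β hk => hle _ ((totalDegree_pPoly_le d a β).trans hk.le), fun hk p hp => ?_⟩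
  refine linearMap_eq_zero_of_totalDegree_le l (fun s hs => ?_) hp
  have hsum : ∑ i, s i = s.sum fun _ e => e :=
    (Finsupp.sum_fintype s (fun _ e => e) fun _ => rfl).symm
  rcases hs.lt_or_eq with hlt | heq
  · exact h _ (by rwa [totalDegree_monomial _ one_ne_zero])
  · simpa [pPoly] using hk 0 s (by omega)

theorem VanishesLT.neg_one_pow_mul_tensorApply_distPoly (h : VanishesLT l k) :
    (-1) ^ k * tensorApply l l (distPoly d k) =
      ∑ b ∈ range (k + 1), ∑ a ∈ range (k - b + 1), ∑ β ∈ piAntidiag univ b,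
        if 2 * a + b = k then
          2 ^ b * k.choose b * (k - b).choose a * Nat.multinomial univ β *
            l (pPoly d a (Finsupp.equivFunOnFinite.symm β)) ^ 2
        else 0 := by
  rw [tensorApply_distPoly, mul_sum]
  refine sum_congr rfl fun b hb => ?_
  rw [mul_sum]
  refine sum_congr rfl fun a ha => ?_
  rw [mul_sum]
  refine sum_congr rfl fun β hβ => ?_
  have hβb : ∑ i, β i = b := (mem_piAntidiag.mp hβ).1
  rw [mem_range] at hb ha
  rw [h.apply_pPoly_mul_apply_pPoly (by omega : a + ∑ i, β i + (k - b - a) = k), hβb]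
  split_ifs with hk
  · have hsign : (-1 : ℝ) ^ k * (-2) ^ b = 2 ^ b := by
      rw [← hk, pow_add, pow_mul, neg_one_sq, one_pow, one_mul, ← mul_pow]
      norm_num
    rw [← hsign]
    ring
  · ring

theorem VanishesLT.tensorApply_distPoly_eq_zero_iff (h : VanishesLT l k) :
    tensorApply l l (distPoly d k) = 0 ↔ ∀ a (β : Fin d → ℕ), 2 * a + ∑ i, β i = k →
      l (pPoly d a (Finsupp.equivFunOnFinite.symm β)) = 0 := by
  rw [← mul_eq_zero_iff_left (pow_ne_zero k (neg_ne_zero.mpr one_ne_zero)),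
    h.neg_one_pow_mul_tensorApply_distPoly]
  simp (disch := intro _ _; positivity) only [sum_eq_zero_iff_of_nonneg]
  have hcoeff {a b : ℕ} {β : Fin d → ℕ} (hk : 2 * a + b = k) :
      (2 : ℝ) ^ b * k.choose b * (k - b).choose a * Nat.multinomial univ β ≠ 0 := by
    have := Nat.multinomial_pos univ β
    have := Nat.choose_pos (by omega : b ≤ k)
    have := Nat.choose_pos (by omega : a ≤ k - b)
    positivity
  simp only [ite_eq_right_iff, mem_range, mem_piAntidiag, mem_univ, implies_true, and_true]
  constructor
  · intro H a β hk
    have := H (∑ i, β i) (by omega) a (by omega) β rfl hk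
    rwa [mul_eq_zero, or_iff_right (hcoeff hk), sq_eq_zero_iff] at this
  · rintro H b - a - β rfl hk
    rw [H a β hk, sq, mul_zero, mul_zero]

end VanishesLT

/-- If `λ ⊥ Π_{<k}` then `(λ⊗λ)‖x−y‖^(2k) = 0` iff `λ ⊥ Π_{≤k}`. -/
theorem tensor_sq_dist_eq_zero_iff (d k : ℕ) (l : Module.Dual ℝ (MvPolynomial (Fin d) ℝ))
    (h : VanishesLT l k) :
    tensorApply l l (distPoly d k) = 0 ↔ VanishesLE l k := by
  rw [h.tensorApply_distPoly_eq_zero_iff, h.vanishesLE_iff]
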